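/- For every nonnegative integer d, the polynomial p_d(z) = P_{d,d}(z) satisfies the second-order differential identity z(4z+1) p_d''(z) = 2((2d-3)z + d) p_d'(z) - d(d-1) p_d(z) as polynomials in z over the rationals. -/

import Mathlib

open Polynomial

/-- The multinomial coefficient `(a+b+c)! / (a! b! c!)`. -/
def mult3 (a b c : ℕ) : ℕ := (a + b + c).factorial / (a.factorial * b.factorial * c.factorial)

/-- `P k n = ∑_{b=0}^{⌊n/2⌋} multinomial(k+n-b; k, b, n-2b) z^b ∈ ℚ[z]`. -/
noncomputable def Ppoly (k n : ℕ) : Polynomial ℚ :=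
  ∑ b ∈ Finset.range (n / 2 + 1), C (mult3 k b (n - 2 * b) : ℚ) * X ^ b

/-! Comparing coefficients of `z^b`, the identity is equivalent to the two-term recurrence
`(b+1)(2d-b) c_{b+1} = (d-2b)(d-2b-1) c_b` for the coefficients `c_b = (2d-b)! / (d! b! (d-2b)!)`
of `p_d`, which is just the ratio of consecutive multinomial coefficients. -/

lemma coeff_X_mul_derivative {R : Type*} [Semiring R] (p : R[X]) (n : ℕ) :
    (X * derivative p).coeff n = n * p.coeff n := by
  cases n with
  | zero => simp
  | succ n => rw [coeff_X_mul, coeff_derivative, ← Nat.cast_succ, Nat.cast_comm]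

lemma coeff_X_sq_mul_derivative_derivative {R : Type*} [CommRing R] (p : R[X]) (n : ℕ) :
    (X ^ 2 * derivative (derivative p)).coeff n = n * (n - 1) * p.coeff n := by
  have h : X ^ 2 * derivative (derivative p)
      = X * derivative (X * derivative p) - X * derivative p := by
    simp only [derivative_mul, derivative_X]; ring
  rw [h, coeff_sub, coeff_X_mul_derivative, coeff_X_mul_derivative]
  ring

lemma factorial_mul_mult3 (a b c : ℕ) :
    a.factorial * b.factorial * c.factorial * mult3 a b c = (a + b + c).factorial :=
  Nat.mul_div_cancel' <| (Nat.mul_dvd_mul_right (Nat.factorial_mul_factorial_dvd_factorial_add a b)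
    _).trans (Nat.factorial_mul_factorial_dvd_factorial_add _ _)

lemma mult3_succ_mid (a b c : ℕ) :
    (b + 1) * (a + b + c + 2) * mult3 a (b + 1) c = (c + 2) * (c + 1) * mult3 a b (c + 2) := by
  have hpos : 0 < a.factorial * b.factorial * c.factorial := by positivity
  refine Nat.eq_of_mul_eq_mul_left hpos ?_
  have h₁ := factorial_mul_mult3 a (b + 1) c
  have h₂ := factorial_mul_mult3 a b (c + 2)
  simp only [Nat.factorial_succ] at h₁ h₂
  rw [show a + b + (c + 2) = a + b + c + 1 + 1 by ring, Nat.factorial_succ] at h₂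
  rw [show a + (b + 1) + c = a + b + c + 1 by ring] at h₁
  rw [← h₁] at h₂
  linear_combination h₂.symm

lemma coeff_Ppoly (k n b : ℕ) :
    (Ppoly k n).coeff b = if 2 * b ≤ n then (mult3 k b (n - 2 * b) : ℚ) else 0 := by
  simp only [Ppoly, finsetSum_coeff, coeff_C_mul, coeff_X_pow, mul_ite, mul_one, mul_zero,
    Finset.sum_ite_eq, Finset.mem_range]
  congr 1
  exact propext (by omega)

lemma Ppoly_coeff_recurrence (k n b : ℕ) :
    ((b : ℚ) + 1) * (k + n - b) * (Ppoly k n).coeff (b + 1)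
      = (n - 2 * b) * (n - 2 * b - 1) * (Ppoly k n).coeff b := by
  simp only [coeff_Ppoly]
  by_cases hb : 2 * b + 2 ≤ n
  · obtain ⟨c, rfl⟩ : ∃ c, n = c + 2 * b + 2 := ⟨n - (2 * b + 2), by omega⟩
    rw [if_pos (by omega), if_pos (by omega), show c + 2 * b + 2 - 2 * (b + 1) = c by omega,
      show c + 2 * b + 2 - 2 * b = c + 2 by omega]
    have h := congrArg (Nat.cast : ℕ → ℚ) (mult3_succ_mid k b c)
    push_cast at h ⊢
    linear_combination h
  · rw [if_neg (by omega)]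
    split_ifs
    · obtain rfl | rfl : n = 2 * b ∨ n = 2 * b + 1 := by omega
      all_goals push_cast; ring
    · ring

theorem stmt3 (d : ℕ) :
    X * (C 4 * X + 1) * derivative (derivative (Ppoly d d)) =
      C 2 * (C (2 * (d : ℚ) - 3) * X + C (d : ℚ)) * derivative (Ppoly d d)
        - C ((d : ℚ) * ((d : ℚ) - 1)) * Ppoly d d := by
  set p := Ppoly d d
  rw [show X * (C 4 * X + 1) * derivative (derivative p)
      = C 4 * (X ^ 2 * derivative (derivative p)) + X * derivative (derivative p) by ring,
    show C 2 * (C (2 * (d : ℚ) - 3) * X + C (d : ℚ)) * derivative p - C ((d : ℚ) * (d - 1)) * p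
      = C (2 * (2 * (d : ℚ) - 3)) * (X * derivative p) + C (2 * (d : ℚ)) * derivative p
        - C ((d : ℚ) * (d - 1)) * p by simp only [C_mul]; ring]
  ext n
  simp only [coeff_add, coeff_sub, coeff_C_mul, coeff_X_sq_mul_derivative_derivative,
    coeff_X_mul_derivative, coeff_derivative]
  linear_combination -Ppoly_coeff_recurrence d d n
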